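/- Lemma (Lipschitz continuity of the discretized value function): For all (t_n, x₁, x₂, i) ∈ Π × ℝ^d × ℝ^d × I_q, |v̄_Π(t_n, x₁, i) − v̄_Π(t_n, x₂, i)| ≤ C_n |x₁ − x₂|, where C_N = e^{−ρ t_N} C_g and C_n = h C_f e^{−ρ t_n} + C_{n+1}(1 + L h) for n = N−1,…,0, with L := C_b + C_σ²/2; in particular there exists C > 0 such that C_n ≤ C e^{−ρ t_n} e^{L(T − t_n)} for all n. -/

import Mathlib

open MeasureTheory ProbabilityTheory

/-- The Euclidean norm on `Fin n → ℝ`. -/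
noncomputable def vnorm {n : ℕ} (x : Fin n → ℝ) : ℝ := Real.sqrt (∑ i, x i ^ 2)

/-- The Frobenius norm of a `d × d` real matrix. -/
noncomputable def frobNorm {n : ℕ} (A : Matrix (Fin n) (Fin n) ℝ) : ℝ :=
  Real.sqrt (∑ i, ∑ j, A i j ^ 2)

/-- One step of the Euler–Maruyama scheme of step `h` at time `t` from `x` with noise `g`. -/
noncomputable def eulerStep {d : ℕ} (b : ℝ → (Fin d → ℝ) → Fin d → ℝ)
    (σ : ℝ → (Fin d → ℝ) → Matrix (Fin d) (Fin d) ℝ) (h t : ℝ) (x g : Fin d → ℝ) :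
    Fin d → ℝ :=
  fun m => x m + b t x m * h + Real.sqrt h * (σ t x).mulVec g m

/-!
Write `Δ = x - y`. For a common Gaussian increment `G`, the difference of the two Euler steps is
the Gaussian vector `Δ + h (b(x) - b(y)) + √h (σ(x) - σ(y)) G`, whose second moment is
`|Δ + h (b(x) - b(y))|² + h |σ(x) - σ(y)|²_F ≤ ((1 + C_b h)² + C_σ² h) |Δ|² ≤ (1 + L h)² |Δ|²`.
By Cauchy–Schwarz a `C`-Lipschitz function of the next step therefore moves in mean by at most
`C (1 + L h) |Δ|`. Taking a maximum over regimes of functions that are each Lipschitz keeps the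
worst constant, and the switching cost cancels since it does not depend on `x`; this gives the
recursion for `C_n`. Solving the recursion with `1 + L h ≤ e^{L h}` and `e^{-ρ t_{n+1}} ≤ e^{-ρ t_n}`
gives `C_n ≤ (C_g + C_f (T - t_n)) e^{-ρ t_n} e^{L (T - t_n)}`.
-/

open scoped Matrix

section Norms

variable {d : ℕ}

lemma vnorm_eq_norm_toLp (x : Fin d → ℝ) : vnorm x = ‖WithLp.toLp 2 x‖ := by
  simp [vnorm, EuclideanSpace.norm_eq, sq_abs]

lemma vnorm_nonneg (x : Fin d → ℝ) : 0 ≤ vnorm x := Real.sqrt_nonneg _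

lemma vnorm_sq (x : Fin d → ℝ) : vnorm x ^ 2 = ∑ i, x i ^ 2 :=
  Real.sq_sqrt (Finset.sum_nonneg fun _ _ => sq_nonneg _)

lemma vnorm_add_le (x y : Fin d → ℝ) : vnorm (x + y) ≤ vnorm x + vnorm y := by
  simpa only [vnorm_eq_norm_toLp, WithLp.toLp_add] using norm_add_le _ _

lemma vnorm_smul (c : ℝ) (x : Fin d → ℝ) : vnorm (c • x) = |c| * vnorm x := by
  simpa only [vnorm_eq_norm_toLp, WithLp.toLp_smul, Real.norm_eq_abs] using norm_smul c _

@[fun_prop]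
lemma continuous_vnorm : Continuous (vnorm (n := d)) := by
  unfold vnorm; fun_prop

lemma frobNorm_nonneg (A : Matrix (Fin d) (Fin d) ℝ) : 0 ≤ frobNorm A := Real.sqrt_nonneg _

lemma frobNorm_sq (A : Matrix (Fin d) (Fin d) ℝ) : frobNorm A ^ 2 = ∑ i, ∑ j, A i j ^ 2 :=
  Real.sq_sqrt (Finset.sum_nonneg fun _ _ => Finset.sum_nonneg fun _ _ => sq_nonneg _)

lemma frobNorm_smul (c : ℝ) (A : Matrix (Fin d) (Fin d) ℝ) :
    frobNorm (c • A) = |c| * frobNorm A := by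
  simp only [frobNorm, Matrix.smul_apply, smul_eq_mul, mul_pow, ← Finset.mul_sum]
  rw [Real.sqrt_mul (sq_nonneg c), Real.sqrt_sq_eq_abs]

lemma continuous_of_abs_sub_le_mul_vnorm {W : (Fin d → ℝ) → ℝ} {c : ℝ}
    (hW : ∀ a a', |W a - W a'| ≤ c * vnorm (a - a')) : Continuous W := by
  have hLip : LipschitzWith (Real.toNNReal c) (W ∘ WithLp.ofLp (p := 2)) :=
    LipschitzWith.of_dist_le' fun a a' => by
      simpa [Real.dist_eq, dist_eq_norm, vnorm_eq_norm_toLp] using hW a.ofLp a'.ofLp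
  exact hLip.continuous.comp (PiLp.continuous_toLp 2 _)

end Norms

lemma sqrt_sq_add_sq_le {a b D h Cb Cσ : ℝ} (hh : 0 ≤ h) (hCb : 0 ≤ Cb) (hD : 0 ≤ D)
    (ha₀ : 0 ≤ a) (ha : a ≤ (1 + Cb * h) * D) (hb₀ : 0 ≤ b) (hb : b ≤ Real.sqrt h * (Cσ * D)) :
    Real.sqrt (a ^ 2 + b ^ 2) ≤ (1 + (Cb + Cσ ^ 2 / 2) * h) * D := by
  have ha2 : a ^ 2 ≤ ((1 + Cb * h) * D) ^ 2 := pow_le_pow_left₀ ha₀ ha 2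
  have hb2 : b ^ 2 ≤ h * Cσ ^ 2 * D ^ 2 := by
    calc b ^ 2 ≤ (Real.sqrt h * (Cσ * D)) ^ 2 := pow_le_pow_left₀ hb₀ hb 2
      _ = h * Cσ ^ 2 * D ^ 2 := by rw [mul_pow, Real.sq_sqrt hh]; ring
  -- `(1 + L h)² - (1 + C_b h)² - C_σ² h = (L² - C_b²) h² ≥ 0`
  have hgap : 0 ≤ (Cσ ^ 2 / 2) * (2 * Cb + Cσ ^ 2 / 2) * h ^ 2 * D ^ 2 := by positivity
  rw [Real.sqrt_le_iff]
  exact ⟨by positivity, by nlinarith⟩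

section Gaussian

variable {d : ℕ}

local notation "γ" => MeasureTheory.Measure.pi fun _ : Fin d => gaussianReal 0 1

lemma memLp_eval_gaussianPi (j : Fin d) : MemLp (fun z : Fin d → ℝ => z j) 2 γ :=
  (memLp_id_gaussianReal 2).comp_measurePreserving (measurePreserving_eval _ j)

lemma memLp_mulVec_apply (A : Matrix (Fin d) (Fin d) ℝ) (m : Fin d) :
    MemLp (fun z => (A *ᵥ z) m) 2 γ :=
  memLp_finsetSum Finset.univ fun j _ => (memLp_eval_gaussianPi j).const_mul (A m j)

lemma memLp_add_mulVec_apply (u : Fin d → ℝ) (A : Matrix (Fin d) (Fin d) ℝ) (m : Fin d) :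
    MemLp (fun z => (u + A *ᵥ z) m) 2 γ :=
  (memLp_const (u m)).add (memLp_mulVec_apply A m)

lemma integral_mulVec_apply (A : Matrix (Fin d) (Fin d) ℝ) (m : Fin d) :
    ∫ z, (A *ᵥ z) m ∂γ = 0 := by
  simp only [Matrix.mulVec, dotProduct]
  rw [integral_finsetSum _ fun j _ =>
    ((memLp_eval_gaussianPi j).integrable one_le_two).const_mul _]
  simp [integral_const_mul, integral_eval, integral_id_gaussianReal]

lemma variance_mulVec_apply (A : Matrix (Fin d) (Fin d) ℝ) (m : Fin d) :
    Var[fun z => (A *ᵥ z) m; γ] = ∑ j, A m j ^ 2 := by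
  have hsum : (fun z : Fin d → ℝ => (A *ᵥ z) m) = ∑ j, fun z => A m j * z j := by
    ext z; simp [Matrix.mulVec, dotProduct]
  rw [hsum, variance_sum_pi (X := fun j t => A m j * t)
    fun j => (memLp_id_gaussianReal 2).const_mul _]
  refine Finset.sum_congr rfl fun j _ => ?_
  rw [variance_const_mul, variance_fun_id_gaussianReal, NNReal.coe_one, mul_one]

lemma integral_sq_add_mulVec_apply (u : Fin d → ℝ) (A : Matrix (Fin d) (Fin d) ℝ) (m : Fin d) :
    ∫ z, (u + A *ᵥ z) m ^ 2 ∂γ = u m ^ 2 + ∑ j, A m j ^ 2 := by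
  have hvar := variance_eq_sub (memLp_add_mulVec_apply u A m)
  simp only [Pi.add_apply] at hvar ⊢
  have hmean : ∫ z, u m + (A *ᵥ z) m ∂γ = u m := by
    rw [integral_add (integrable_const _) ((memLp_mulVec_apply A m).integrable one_le_two),
      integral_mulVec_apply]
    simp
  rw [variance_const_add (memLp_mulVec_apply A m).aestronglyMeasurable,
    variance_mulVec_apply] at hvar
  simp only [Pi.pow_apply, hmean] at hvar
  linarith

lemma integrable_vnorm_add_mulVec_sq (u : Fin d → ℝ) (A : Matrix (Fin d) (Fin d) ℝ) :
    Integrable (fun z => vnorm (u + A *ᵥ z) ^ 2) γ := by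
  simp only [vnorm_sq]
  exact integrable_finsetSum _ fun m _ => (memLp_add_mulVec_apply u A m).integrable_sq

lemma integral_vnorm_add_mulVec_sq (u : Fin d → ℝ) (A : Matrix (Fin d) (Fin d) ℝ) :
    ∫ z, vnorm (u + A *ᵥ z) ^ 2 ∂γ = vnorm u ^ 2 + frobNorm A ^ 2 := by
  simp only [vnorm_sq, frobNorm_sq]
  rw [integral_finsetSum _ fun m _ => (memLp_add_mulVec_apply u A m).integrable_sq,
    ← Finset.sum_add_distrib]
  exact Finset.sum_congr rfl fun m _ => integral_sq_add_mulVec_apply u A m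

lemma memLp_vnorm_add_mulVec (u : Fin d → ℝ) (A : Matrix (Fin d) (Fin d) ℝ) :
    MemLp (fun z => vnorm (u + A *ᵥ z)) 2 γ :=
  (memLp_two_iff_integrable_sq (by fun_prop)).2 (integrable_vnorm_add_mulVec_sq u A)

lemma integral_vnorm_add_mulVec_le (u : Fin d → ℝ) (A : Matrix (Fin d) (Fin d) ℝ) :
    ∫ z, vnorm (u + A *ᵥ z) ∂γ ≤ Real.sqrt (vnorm u ^ 2 + frobNorm A ^ 2) := by
  have hvar := variance_eq_sub (memLp_vnorm_add_mulVec u A) ▸ variance_nonneg _ γ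
  rw [← integral_vnorm_add_mulVec_sq]
  refine Real.le_sqrt_of_sq_le ?_
  simp only [Pi.pow_apply] at hvar
  linarith

lemma integrable_comp_add_mulVec {W : (Fin d → ℝ) → ℝ} {c : ℝ}
    (hW : ∀ a a', |W a - W a'| ≤ c * vnorm (a - a')) (u : Fin d → ℝ)
    (A : Matrix (Fin d) (Fin d) ℝ) :
    Integrable (fun z => W (u + A *ᵥ z)) γ := by
  have hbound : Integrable (fun z => |W u| + c * vnorm (0 + A *ᵥ z)) γ :=
    (integrable_const _).add (((memLp_vnorm_add_mulVec 0 A).integrable one_le_two).const_mul c)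
  refine hbound.mono'
    ((continuous_of_abs_sub_le_mul_vnorm hW).comp (by fun_prop)).aestronglyMeasurable
    (ae_of_all _ fun z => ?_)
  have := hW (u + A *ᵥ z) u
  rw [add_sub_cancel_left] at this
  rw [Real.norm_eq_abs, zero_add]
  linarith [abs_sub_abs_le_abs_sub (W (u + A *ᵥ z)) (W u)]

section EulerStep

variable (b : ℝ → (Fin d → ℝ) → Fin d → ℝ)
  (σ : ℝ → (Fin d → ℝ) → Matrix (Fin d) (Fin d) ℝ) (h t : ℝ)

lemma eulerStep_eq_add_mulVec (x z : Fin d → ℝ) :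
    eulerStep b σ h t x z = (x + h • b t x) + (Real.sqrt h • σ t x) *ᵥ z := by
  ext m
  simp only [eulerStep, Pi.add_apply, Pi.smul_apply, Matrix.smul_mulVec, smul_eq_mul]
  ring

lemma eulerStep_sub_eulerStep (x y z : Fin d → ℝ) :
    eulerStep b σ h t x z - eulerStep b σ h t y z =
      (x - y + h • (b t x - b t y)) + (Real.sqrt h • (σ t x - σ t y)) *ᵥ z := by
  simp only [eulerStep_eq_add_mulVec, smul_sub, Matrix.sub_mulVec]
  abel

lemma integrable_comp_eulerStep {W : (Fin d → ℝ) → ℝ} {c : ℝ}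
    (hW : ∀ a a', |W a - W a'| ≤ c * vnorm (a - a')) (x : Fin d → ℝ) :
    Integrable (fun z => W (eulerStep b σ h t x z)) γ := by
  simpa only [eulerStep_eq_add_mulVec] using integrable_comp_add_mulVec hW _ _

variable {b σ h}

lemma integral_vnorm_eulerStep_sub_le {Cb Cσ : ℝ} (hh : 0 ≤ h) (hCb : 0 ≤ Cb)
    (hb : ∀ x y, vnorm (b t x - b t y) ≤ Cb * vnorm (x - y))
    (hσ : ∀ x y, frobNorm (σ t x - σ t y) ≤ Cσ * vnorm (x - y)) (x y : Fin d → ℝ) :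
    ∫ z, vnorm (eulerStep b σ h t x z - eulerStep b σ h t y z) ∂γ ≤
      (1 + (Cb + Cσ ^ 2 / 2) * h) * vnorm (x - y) := by
  simp only [eulerStep_sub_eulerStep]
  refine (integral_vnorm_add_mulVec_le _ _).trans
    (sqrt_sq_add_sq_le hh hCb (vnorm_nonneg _) (vnorm_nonneg _) ?_ (frobNorm_nonneg _) ?_)
  · calc vnorm (x - y + h • (b t x - b t y))
        ≤ vnorm (x - y) + h * (Cb * vnorm (x - y)) := by
          grw [vnorm_add_le, vnorm_smul, abs_of_nonneg hh, hb]
      _ = (1 + Cb * h) * vnorm (x - y) := by ring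
  · rw [frobNorm_smul, abs_of_nonneg (Real.sqrt_nonneg h)]
    exact mul_le_mul_of_nonneg_left (hσ x y) (Real.sqrt_nonneg h)

lemma abs_integral_comp_eulerStep_sub_le {Cb Cσ c : ℝ} (hh : 0 ≤ h) (hCb : 0 ≤ Cb)
    (hb : ∀ x y, vnorm (b t x - b t y) ≤ Cb * vnorm (x - y))
    (hσ : ∀ x y, frobNorm (σ t x - σ t y) ≤ Cσ * vnorm (x - y)) {W : (Fin d → ℝ) → ℝ}
    (hc : 0 ≤ c) (hW : ∀ a a', |W a - W a'| ≤ c * vnorm (a - a')) (x y : Fin d → ℝ) :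
    |∫ z, W (eulerStep b σ h t x z) ∂γ - ∫ z, W (eulerStep b σ h t y z) ∂γ| ≤
      c * ((1 + (Cb + Cσ ^ 2 / 2) * h) * vnorm (x - y)) := by
  have hInt := integrable_comp_eulerStep b σ h t hW
  rw [← integral_sub (hInt x) (hInt y)]
  calc _ ≤ ∫ z, |W (eulerStep b σ h t x z) - W (eulerStep b σ h t y z)| ∂γ :=
        abs_integral_le_integral_abs
    _ ≤ ∫ z, c * vnorm (eulerStep b σ h t x z - eulerStep b σ h t y z) ∂γ := by
        refine integral_mono ((hInt x).sub (hInt y)).abs ?_ fun z => hW _ _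
        simpa only [eulerStep_sub_eulerStep] using
          ((memLp_vnorm_add_mulVec _ _).integrable one_le_two).const_mul c
    _ ≤ _ := by
        rw [integral_const_mul]
        exact mul_le_mul_of_nonneg_left (integral_vnorm_eulerStep_sub_le t hh hCb hb hσ x y) hc

end EulerStep

end Gaussian

lemma abs_ciSup_sub_ciSup_le {ι : Type*} [Finite ι] [Nonempty ι] {F H : ι → ℝ} {B : ℝ}
    (hB : ∀ j, |F j - H j| ≤ B) : |(⨆ j, F j) - ⨆ j, H j| ≤ B := by
  rw [abs_sub_le_iff, sub_le_iff_le_add, sub_le_iff_le_add]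
  constructor
  · refine ciSup_le fun j => ?_
    linarith [(abs_sub_le_iff.1 (hB j)).1, le_ciSup (Finite.bddAbove_range H) j]
  · refine ciSup_le fun j => ?_
    linarith [(abs_sub_le_iff.1 (hB j)).2, le_ciSup (Finite.bddAbove_range F) j]

lemma abs_iSup_integral_eulerStep_sub_le
    {Ω : Type*} [MeasurableSpace Ω] {μ : Measure Ω} {d : ℕ} {G : Ω → Fin d → ℝ}
    (hGmeas : Measurable G) (hG : μ.map G = Measure.pi fun _ : Fin d => gaussianReal 0 1)
    {ι : Type*} [Finite ι] [Nonempty ι]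
    {b : ℝ → (Fin d → ℝ) → Fin d → ℝ} {σ : ℝ → (Fin d → ℝ) → Matrix (Fin d) (Fin d) ℝ}
    {h t Cb Cσ a c : ℝ} (hh : 0 ≤ h) (hCb : 0 ≤ Cb)
    (hb : ∀ x y, vnorm (b t x - b t y) ≤ Cb * vnorm (x - y))
    (hσ : ∀ x y, frobNorm (σ t x - σ t y) ≤ Cσ * vnorm (x - y))
    {F : (Fin d → ℝ) → ι → ℝ} (hF : ∀ x y j, |F x j - F y j| ≤ a * vnorm (x - y))
    (k : ι → ι → ℝ) {W : (Fin d → ℝ) → ι → ℝ} (hc : 0 ≤ c)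
    (hW : ∀ x y j, |W x j - W y j| ≤ c * vnorm (x - y)) (x y : Fin d → ℝ) (i : ι) :
    |(⨆ j, (F x j - k i j + ∫ ω, W (eulerStep b σ h t x (G ω)) j ∂μ)) -
        ⨆ j, (F y j - k i j + ∫ ω, W (eulerStep b σ h t y (G ω)) j ∂μ)| ≤
      (a + c * (1 + (Cb + Cσ ^ 2 / 2) * h)) * vnorm (x - y) := by
  refine abs_ciSup_sub_ciSup_le fun j => ?_
  have hWj : ∀ x' y', |W x' j - W y' j| ≤ c * vnorm (x' - y') := fun x' y' => hW x' y' j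
  have hmap : ∀ x', ∫ ω, W (eulerStep b σ h t x' (G ω)) j ∂μ =
      ∫ z, W (eulerStep b σ h t x' z) j ∂(Measure.pi fun _ : Fin d => gaussianReal 0 1) := by
    intro x'
    rw [← hG, integral_map hGmeas.aemeasurable]
    exact hG ▸ (integrable_comp_eulerStep b σ h t hWj x').aestronglyMeasurable
  rw [hmap, hmap, add_sub_add_comm, sub_sub_sub_cancel_right]
  grw [abs_add_le, hF x y j, abs_integral_comp_eulerStep_sub_le t hh hCb hb hσ hc hWj x y]
  exact le_of_eq (by ring)

section Recursion

variable {N : ℕ} {h ρ L Cf Cg : ℝ} {C : ℕ → ℝ}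

lemma nonneg_of_backward_rec (hh : 0 ≤ h) (hL : 0 ≤ L) (hCf : 0 ≤ Cf) (hCg : 0 ≤ Cg)
    (hCN : C N = Real.exp (-ρ * (N * h)) * Cg)
    (hCrec : ∀ n < N, C n = h * Cf * Real.exp (-ρ * (n * h)) + C (n + 1) * (1 + L * h))
    {n : ℕ} (hn : n ≤ N) : 0 ≤ C n := by
  induction hn using Nat.decreasingInduction with
  | self => rw [hCN]; positivity
  | of_succ n hn ih => rw [hCrec n hn]; positivity

lemma le_of_backward_rec (hh : 0 ≤ h) (hρ : 0 ≤ ρ) (hL : 0 ≤ L) (hCf : 0 ≤ Cf) (hCg : 0 ≤ Cg)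
    (hCN : C N = Real.exp (-ρ * (N * h)) * Cg)
    (hCrec : ∀ n < N, C n = h * Cf * Real.exp (-ρ * (n * h)) + C (n + 1) * (1 + L * h))
    {n : ℕ} (hn : n ≤ N) :
    C n ≤ (Cg + Cf * (N * h - n * h)) * Real.exp (-ρ * (n * h)) *
      Real.exp (L * (N * h - n * h)) := by
  induction hn using Nat.decreasingInduction with
  | self => rw [hCN]; simp [mul_comm]
  | of_succ n hn ih =>
    have hrest : 0 ≤ (N : ℝ) * h - (n + 1 : ℕ) * h := by
      rw [← sub_mul]; exact mul_nonneg (sub_nonneg.2 (Nat.cast_le.2 hn)) hh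
    push_cast at hrest ih ⊢
    have hgrowth : 1 ≤ Real.exp (L * (N * h - n * h)) :=
      Real.one_le_exp (mul_nonneg hL (by linarith))
    have hdiscount : Real.exp (-ρ * ((n + 1) * h)) ≤ Real.exp (-ρ * (n * h)) :=
      Real.exp_le_exp.2 (mul_le_mul_of_nonpos_left (by linarith) (neg_nonpos.2 hρ))
    have hshift : Real.exp (L * (N * h - (n + 1) * h)) * Real.exp (L * h) =
        Real.exp (L * (N * h - n * h)) := by
      rw [← Real.exp_add]; ring_nf
    rw [hCrec n hn]
    calc _ ≤ h * Cf * Real.exp (-ρ * (n * h)) * Real.exp (L * (N * h - n * h)) +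
          (Cg + Cf * (N * h - (n + 1) * h)) * Real.exp (-ρ * ((n + 1) * h)) *
            Real.exp (L * (N * h - (n + 1) * h)) * (1 + L * h) :=
          add_le_add (le_mul_of_one_le_right (by positivity) hgrowth)
            (mul_le_mul_of_nonneg_right ih (by positivity))
      _ ≤ h * Cf * Real.exp (-ρ * (n * h)) * Real.exp (L * (N * h - n * h)) +
          (Cg + Cf * (N * h - (n + 1) * h)) * Real.exp (-ρ * (n * h)) *
            Real.exp (L * (N * h - (n + 1) * h)) * Real.exp (L * h) := by
          gcongr _ + _ * ?_ * _ * ?_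
          linarith [Real.add_one_le_exp (L * h)]
      _ = _ := by rw [← hshift]; ring

end Recursion

theorem discretized_value_function_lipschitz_general
    {Ω : Type*} [MeasurableSpace Ω] (μ : Measure Ω)
    {d : ℕ} {ι : Type*} [Fintype ι] [Nonempty ι]
    (G : Ω → Fin d → ℝ) (hGmeas : Measurable G)
    (hG : μ.map G = Measure.pi fun _ : Fin d => gaussianReal 0 1)
    (h : ℝ) (hh : 0 < h) (N : ℕ) (ρ : ℝ) (hρ : 0 ≤ ρ)
    (b : ℝ → (Fin d → ℝ) → Fin d → ℝ) (σ : ℝ → (Fin d → ℝ) → Matrix (Fin d) (Fin d) ℝ)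
    (Cb Cσ : ℝ) (hCb : 0 < Cb)
    (hb : ∀ t x y, vnorm (b t x - b t y) ≤ Cb * vnorm (x - y))
    (hσ : ∀ t x y, frobNorm (σ t x - σ t y) ≤ Cσ * vnorm (x - y))
    (Cf Cg : ℝ) (hCf : 0 ≤ Cf) (hCg : 0 ≤ Cg)
    (f : ℝ → (Fin d → ℝ) → ι → ℝ)
    (hf : ∀ t x y i, |f t x i - f t y i| ≤ Cf * Real.exp (-ρ * t) * vnorm (x - y))
    (k : ℝ → ι → ι → ℝ)
    (g : (Fin d → ℝ) → ι → ℝ)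
    (hg : ∀ x y i, |g x i - g y i| ≤ Cg * Real.exp (-ρ * (N * h)) * vnorm (x - y))
    (V : ℕ → (Fin d → ℝ) → ι → ℝ)
    (hVN : ∀ x i, V N x i = g x i)
    (hVrec : ∀ n < N, ∀ x i, V n x i =
      ⨆ j : ι, (h * f (n * h) x j - k (n * h) i j +
        ∫ ω, V (n + 1) (eulerStep b σ h (n * h) x (G ω)) j ∂μ))
    (C : ℕ → ℝ)
    (hCN : C N = Real.exp (-ρ * (N * h)) * Cg)
    (hCrec : ∀ n < N, C n =
      h * Cf * Real.exp (-ρ * (n * h)) + C (n + 1) * (1 + (Cb + Cσ ^ 2 / 2) * h)) :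
    (∀ n ≤ N, ∀ x y i, |V n x i - V n y i| ≤ C n * vnorm (x - y)) ∧
      ∃ K : ℝ, 0 < K ∧ ∀ n ≤ N,
        C n ≤ K * Real.exp (-ρ * (n * h)) * Real.exp ((Cb + Cσ ^ 2 / 2) * (N * h - n * h)) := by
  have hL : 0 ≤ Cb + Cσ ^ 2 / 2 := by positivity
  have hCnonneg := fun n (hn : n ≤ N) => nonneg_of_backward_rec hh.le hL hCf hCg hCN hCrec hn
  refine ⟨fun n hn => ?_, Cg + Cf * (N * h) + 1, by positivity, fun n hn => ?_⟩
  · induction hn using Nat.decreasingInduction with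
    | self => intro x y i; rw [hVN, hVN, hCN, mul_comm (Real.exp _)]; exact hg x y i
    | of_succ n hn ih =>
      intro x y i
      rw [hVrec n hn x i, hVrec n hn y i, hCrec n hn]
      refine abs_iSup_integral_eulerStep_sub_le hGmeas hG hh.le hCb.le (hb _) (hσ _)
        (F := fun x j => h * f (n * h) x j) (fun x y j => ?_) (k (n * h)) (hCnonneg _ hn) ih x y i
      rw [← mul_sub, abs_mul, abs_of_pos hh, mul_assoc, mul_assoc]
      exact mul_le_mul_of_nonneg_left (by simpa only [mul_assoc] using hf _ x y j) hh.le
  · refine (le_of_backward_rec hh.le hρ hL hCf hCg hCN hCrec hn).trans ?_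
    gcongr ?_ * _ * _
    nlinarith [mul_nonneg hCf (by positivity : (0 : ℝ) ≤ n * h)]

/-- **Lemma (Lipschitz continuity of the discretized value function).**
The value function `V = v̄_Π` of the discretized switching problem, defined by the backward
dynamic programming recursion `V N x i = g x i` and
`V n x i = max_j { h f(t_n,x,j) - k(t_n,i,j) + E[V (n+1) (X̄_{t_{n+1}}^{t_n,x}) j] }`,
is Lipschitz in `x` with constant `C_n`, where `C_N = e^{-ρ t_N} C_g` and
`C_n = h C_f e^{-ρ t_n} + C_{n+1}(1 + Lh)`, `L = C_b + C_σ²/2`; in particular there is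
`K > 0` with `C_n ≤ K e^{-ρ t_n} e^{L(T - t_n)}` for all `n`. -/
theorem discretized_value_function_lipschitz
    {Ω : Type*} [MeasurableSpace Ω] (μ : Measure Ω) [IsProbabilityMeasure μ]
    {d : ℕ} {ι : Type*} [Fintype ι] [Nonempty ι]
    (G : Ω → Fin d → ℝ) (hGmeas : Measurable G)
    (hG : μ.map G = Measure.pi fun _ : Fin d => gaussianReal 0 1)
    (h : ℝ) (hh : 0 < h) (N : ℕ) (ρ : ℝ) (hρ : 0 ≤ ρ)
    (b : ℝ → (Fin d → ℝ) → Fin d → ℝ) (σ : ℝ → (Fin d → ℝ) → Matrix (Fin d) (Fin d) ℝ)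
    (Cb Cσ : ℝ) (hCb : 0 < Cb) (hCσ : 0 < Cσ)
    (hb : ∀ t x y, vnorm (b t x - b t y) ≤ Cb * vnorm (x - y))
    (hσ : ∀ t x y, frobNorm (σ t x - σ t y) ≤ Cσ * vnorm (x - y))
    (Cf Cg : ℝ) (hCf : 0 ≤ Cf) (hCg : 0 ≤ Cg)
    (f : ℝ → (Fin d → ℝ) → ι → ℝ)
    (hf : ∀ t x y i, |f t x i - f t y i| ≤ Cf * Real.exp (-ρ * t) * vnorm (x - y))
    (k : ℝ → ι → ι → ℝ) (hk : ∀ t i j, 0 ≤ k t i j)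
    (g : (Fin d → ℝ) → ι → ℝ)
    (hg : ∀ x y i, |g x i - g y i| ≤ Cg * Real.exp (-ρ * (N * h)) * vnorm (x - y))
    (V : ℕ → (Fin d → ℝ) → ι → ℝ)
    (hVN : ∀ x i, V N x i = g x i)
    (hVrec : ∀ n < N, ∀ x i, V n x i =
      ⨆ j : ι, (h * f (n * h) x j - k (n * h) i j +
        ∫ ω, V (n + 1) (eulerStep b σ h (n * h) x (G ω)) j ∂μ))
    (C : ℕ → ℝ)
    (hCN : C N = Real.exp (-ρ * (N * h)) * Cg)
    (hCrec : ∀ n < N, C n =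
      h * Cf * Real.exp (-ρ * (n * h)) + C (n + 1) * (1 + (Cb + Cσ ^ 2 / 2) * h)) :
    (∀ n ≤ N, ∀ x y i, |V n x i - V n y i| ≤ C n * vnorm (x - y)) ∧
      ∃ K : ℝ, 0 < K ∧ ∀ n ≤ N,
        C n ≤ K * Real.exp (-ρ * (n * h)) * Real.exp ((Cb + Cσ ^ 2 / 2) * (N * h - n * h)) :=
  discretized_value_function_lipschitz_general μ G hGmeas hG h hh N ρ hρ b σ Cb Cσ hCb hb hσ Cf Cg
    hCf hCg f hf k g hg V hVN hVrec C hCN hCrec
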